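/- arXiv:1609.00152 — 6 statements merged into one kernel-verified Lean document; each statement's English description precedes it below -/
import Mathlib

section
/- Let D be a (v,k,λ)-difference set in a finite abelian group G. Then |Dg ∩ (Dg)^(−1)| ∈ {k, λ} for all g ∈ G if and only if −1 is a multiplier of D (i.e., D^(−1) is a translate of D). -/
/-!
Let `r(x)` count the representations `x = ab` with `a, b ∈ D`; then `|Dg ∩ (Dg)⁻¹| = r(g⁻²)`.
If `D⁻¹ = Dc`, a representation `x = ab` is the same as a difference `xc = a (b⁻¹c⁻¹)⁻¹` in `D`,
so `r(x)` is `k` or `λ`. Conversely, `r(g⁻²) = k` means `D⁻¹g⁻² ⊆ D`, whence `D⁻¹ = Dg²`. If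
instead `r = λ` on the whole group `S` of squares, note that `ab ∈ S ↔ ab⁻¹ ∈ S` (they differ
by `b²`), so counting pairs of `D × D` in two ways gives `|S|λ = k + (|S| - 1)λ`, i.e. `k = λ`.
-/

def IsDiffSet {G : Type*} [Group G] [Fintype G] [DecidableEq G]
    (v k l : ℕ) (D : Finset G) : Prop :=
  Fintype.card G = v ∧ D.card = k ∧
    ∀ g : G, g ≠ 1 → ((D ×ˢ D).filter (fun p => p.1 * p.2⁻¹ = g)).card = l

namespace Finset

section Group

variable {G : Type*} [Group G] [DecidableEq G]

def mulRepr (D : Finset G) (x : G) : ℕ := ((D ×ˢ D).filter fun p => p.1 * p.2 = x).card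

def divRepr (D : Finset G) (x : G) : ℕ := ((D ×ˢ D).filter fun p => p.1 * p.2⁻¹ = x).card

theorem mulRepr_eq_card_filter (D : Finset G) (x : G) :
    mulRepr D x = (D.filter fun a => a⁻¹ * x ∈ D).card := by
  refine card_bij' (fun p _ => p.1) (fun a _ => (a, a⁻¹ * x)) ?_ ?_ ?_ ?_ <;>
    simp +contextual [eq_comm]

theorem divRepr_eq_card_filter (D : Finset G) (x : G) :
    divRepr D x = (D.filter fun a => x⁻¹ * a ∈ D).card := by
  refine card_bij' (fun p _ => p.1) (fun a _ => (a, x⁻¹ * a)) ?_ ?_ ?_ ?_ <;>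
    simp +contextual [eq_comm]

theorem divRepr_one (D : Finset G) : divRepr D 1 = D.card := by
  simp [divRepr_eq_card_filter]

theorem image_inv_eq_image_mul_right_of_mulRepr_eq_card {D : Finset G} {x : G}
    (h : mulRepr D x = D.card) : D.image (·⁻¹) = D.image (· * x⁻¹) := by
  rw [mulRepr_eq_card_filter, card_filter_eq_iff] at h
  refine eq_of_subset_of_card_le (fun y hy => ?_) ?_
  · obtain ⟨a, ha, rfl⟩ := mem_image.mp hy
    exact mem_image.mpr ⟨a⁻¹ * x, h a ha, mul_inv_cancel_right _ _⟩
  · rw [card_image_of_injective _ inv_injective,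
      card_image_of_injective _ (mul_left_injective _)]

end Group

section CommGroup

variable {G : Type*} [CommGroup G] [DecidableEq G]

theorem image_mul_right_inter_image_inv (D : Finset G) (g : G) :
    D.image (· * g) ∩ (D.image (· * g)).image (·⁻¹) =
      (D.filter fun a => a⁻¹ * (g ^ 2)⁻¹ ∈ D).image (· * g) := by
  ext x
  simp only [mem_inter, mem_image, mem_filter]
  constructor
  · rintro ⟨⟨a, ha, rfl⟩, y, ⟨b, hb, rfl⟩, hab⟩
    rw [inv_eq_iff_eq_inv, ← eq_mul_inv_iff_mul_eq] at hab
    refine ⟨a, ⟨ha, ?_⟩, rfl⟩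
    convert hb using 1
    rw [hab]
    simp [pow_two, mul_comm, mul_assoc]
  · rintro ⟨a, ⟨ha, hb⟩, rfl⟩
    refine ⟨⟨a, ha, rfl⟩, _, ⟨_, hb, rfl⟩, ?_⟩
    simp [pow_two, mul_comm, mul_assoc]

theorem card_image_mul_right_inter_image_inv (D : Finset G) (g : G) :
    (D.image (· * g) ∩ (D.image (· * g)).image (·⁻¹)).card = mulRepr D (g ^ 2)⁻¹ := by
  rw [image_mul_right_inter_image_inv, card_image_of_injective _ (mul_left_injective g),
    mulRepr_eq_card_filter]

theorem mulRepr_eq_divRepr_mul {D : Finset G} {c : G} (hc : D.image (·⁻¹) = D.image (· * c))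
    (x : G) : mulRepr D x = divRepr D (x * c) := by
  have hinv (y : G) : y⁻¹ ∈ D ↔ y * c⁻¹ ∈ D := by
    simpa [inv_eq_iff_eq_inv] using congr_arg (y ∈ ·) hc
  rw [mulRepr_eq_card_filter, divRepr_eq_card_filter]
  refine congr_arg card (filter_congr fun a _ => ?_)
  rw [← inv_inv (a⁻¹ * x), hinv, mul_inv_rev, inv_inv, mul_inv_rev, mul_rotate c⁻¹]

theorem filter_mul_mem_squares_eq [Fintype G] (D : Finset G) :
    (D ×ˢ D).filter (fun p => p.1 * p.2 ∈ univ.image (· ^ 2)) =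
      (D ×ˢ D).filter (fun p => p.1 * p.2⁻¹ ∈ univ.image (· ^ 2)) := by
  refine filter_congr fun p _ => ?_
  simp only [mem_image, mem_univ, true_and]
  constructor
  · rintro ⟨g, hg⟩
    exact ⟨g * p.2⁻¹, by rw [mul_pow, hg]; group⟩
  · rintro ⟨g, hg⟩
    exact ⟨g * p.2, by rw [mul_pow, hg]; group⟩

end CommGroup

end Finset

open Finset

theorem IsDiffSet.eq_of_forall_mulRepr_sq_eq {G : Type*} [CommGroup G] [Fintype G]
    [DecidableEq G] {v k l : ℕ} {D : Finset G} (hD : IsDiffSet v k l D)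
    (h : ∀ g : G, D.mulRepr (g ^ 2) = l) : k = l := by
  obtain ⟨-, rfl, hdiff⟩ := hD
  set S := univ.image fun g : G => g ^ 2
  have h1 : (1 : G) ∈ S := mem_image.mpr ⟨1, mem_univ _, one_pow 2⟩
  have hsum : ∑ x ∈ S, D.mulRepr x = ∑ x ∈ S, D.divRepr x := by
    simp only [mulRepr, divRepr, sum_card_fiberwise_eq_card_filter]
    exact congr_arg card (filter_mul_mem_squares_eq D)
  have hsum_erase : ∑ x ∈ S.erase 1, D.mulRepr x = ∑ x ∈ S.erase 1, D.divRepr x := by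
    refine sum_congr rfl fun x hx => ?_
    obtain ⟨hx1, hxS⟩ := mem_erase.mp hx
    obtain ⟨g, -, rfl⟩ := mem_image.mp hxS
    rw [h g]
    exact (hdiff _ hx1).symm
  rw [← add_sum_erase S _ h1, ← add_sum_erase S _ h1, hsum_erase, divRepr_one,
    ← one_pow 2, h 1] at hsum
  exact (add_right_cancel hsum).symm

/-- For an abelian difference set `D`: `|Dg ∩ (Dg)⁽⁻¹⁾| ∈ {k, λ}` for all `g` iff
`−1` is a multiplier of `D` (i.e. `D⁽⁻¹⁾` is a translate of `D`). -/
theorem stmt7 {G : Type*} [CommGroup G] [Fintype G] [DecidableEq G]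
    (v k l : ℕ) (D : Finset G) (hD : IsDiffSet v k l D) (hkl : 1 < k - l) :
    (∀ g : G,
        ((D.image (fun d => d * g)) ∩
            ((D.image (fun d => d * g)).image (fun x => x⁻¹))).card = k ∨
        ((D.image (fun d => d * g)) ∩
            ((D.image (fun d => d * g)).image (fun x => x⁻¹))).card = l) ↔
      ∃ g : G, D.image (fun x => x⁻¹) = D.image (fun d => d * g) := by
  simp only [card_image_mul_right_inter_image_inv]
  constructor
  · intro h
    by_cases hk : ∃ g : G, D.mulRepr (g ^ 2)⁻¹ = k
    · obtain ⟨g, hg⟩ := hk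
      exact ⟨_, image_inv_eq_image_mul_right_of_mulRepr_eq_card (hg.trans hD.2.1.symm)⟩
    · simp only [not_exists] at hk
      have hk_eq_l := hD.eq_of_forall_mulRepr_sq_eq fun g => by
        simpa using (h g⁻¹).resolve_left (hk g⁻¹)
      omega
  · rintro ⟨c, hc⟩ g
    rw [mulRepr_eq_divRepr_mul hc]
    by_cases h1 : (g ^ 2)⁻¹ * c = 1
    · exact .inl (by rw [h1, divRepr_one, hD.2.1])
    · exact .inr (hD.2.2 _ h1)
end

section
/- Let D be a (v,k,λ)-difference set in a finite abelian group G with k > λ. Then there exists g ∈ G such that the equation d₁·d₂ = g⁻² has strictly more than λ solutions (d₁,d₂) ∈ D × D. -/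
open Finset

theorem IsDiffSet.card_mul_self_add {G : Type*} [Group G] [Fintype G] [DecidableEq G]
    {v k l : ℕ} {D : Finset G} (hD : IsDiffSet v k l D) : k * k + l = l * v + k := by
  obtain ⟨hv, hk, hl⟩ := hD
  have hdiag : #{p ∈ D ×ˢ D | p.1 * p.2⁻¹ = 1} = k := by
    rw [← hk, ← D.diag_card]
    congr 1
    ext ⟨a, b⟩
    simp only [mem_filter, mem_product, mem_diag, mul_inv_eq_one]
    exact ⟨fun h => ⟨h.1.1, h.2⟩, fun h => ⟨⟨h.1, h.2 ▸ h.1⟩, h.2⟩⟩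
  have hoff : ∑ g ∈ univ.erase 1, #{p ∈ D ×ˢ D | p.1 * p.2⁻¹ = g} = (v - 1) * l := by
    rw [sum_congr rfl fun g hg => hl g (ne_of_mem_erase hg), sum_const, smul_eq_mul,
      card_erase_of_mem (mem_univ _), card_univ, hv]
  have hcount : k * k = (v - 1) * l + k := by
    rw [← hk, ← card_product, card_eq_sum_card_fiberwise fun p _ => mem_univ (p.1 * p.2⁻¹),
      ← sum_erase_add _ _ (mem_univ 1), hoff, hk, hdiag]
  have hvpos : 1 ≤ v := hv ▸ Fintype.card_pos
  obtain ⟨w, rfl⟩ := Nat.exists_eq_add_of_le hvpos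
  rw [hcount]
  simp only [add_tsub_cancel_left]
  ring

theorem Subgroup.mul_mem_iff_mul_inv_mem_of_forall_sq_mem {G : Type*} [Group G]
    {H : Subgroup G} (hH : ∀ g : G, g ^ 2 ∈ H) {a b : G} : a * b ∈ H ↔ a * b⁻¹ ∈ H := by
  have hb : b * b ∈ H := sq b ▸ hH b
  constructor
  · intro hab
    simpa [mul_assoc] using H.mul_mem hab (H.inv_mem hb)
  · intro hab
    simpa [mul_assoc] using H.mul_mem hab hb

theorem Finset.card_filter_comp_eq_eq_sum_sq {α β : Type*} [Fintype β] [DecidableEq β]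
    (s : Finset α) (f : α → β) :
    #{p ∈ s ×ˢ s | f p.1 = f p.2} = ∑ b, #{a ∈ s | f a = b} ^ 2 := by
  rw [card_eq_sum_card_fiberwise fun p _ => mem_univ (f p.1)]
  refine sum_congr rfl fun b _ => ?_
  rw [sq, ← card_product]
  congr 1
  ext ⟨x, y⟩
  simp only [mem_filter, mem_product]
  constructor
  · rintro ⟨⟨⟨hx, hy⟩, hxy⟩, rfl⟩
    exact ⟨⟨hx, rfl⟩, hy, hxy.symm⟩
  · rintro ⟨⟨hx, rfl⟩, hy, hxy⟩
    exact ⟨⟨⟨hx, hy⟩, hxy.symm⟩, rfl⟩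

theorem Finset.sq_card_le_card_mul_card_filter_comp_eq {α β : Type*} [Fintype β]
    [DecidableEq β] (s : Finset α) (f : α → β) :
    #s ^ 2 ≤ Fintype.card β * #{p ∈ s ×ˢ s | f p.1 = f p.2} := by
  rw [card_filter_comp_eq_eq_sum_sq, card_eq_sum_card_fiberwise fun a _ => mem_univ (f a)]
  exact sq_sum_le_card_mul_sum_sq

theorem Subgroup.sq_card_le_index_mul_card_filter_mul_mem {G : Type*} [CommGroup G]
    (H : Subgroup G) [DecidablePred (· ∈ H)] [H.FiniteIndex]
    (hH : ∀ g : G, g ^ 2 ∈ H) (D : Finset G) :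
    #D ^ 2 ≤ H.index * #{p ∈ D ×ˢ D | p.1 * p.2 ∈ H} := by
  classical
  have : Fintype (G ⧸ H) := Fintype.ofFinite _
  have hpairs : {p ∈ D ×ˢ D | p.1 * p.2 ∈ H} =
      {p ∈ D ×ˢ D | (p.1 : G ⧸ H) = p.2} := by
    refine filter_congr fun p _ => ?_
    rw [QuotientGroup.eq, ← H.inv_mem_iff (x := p.1 * p.2), mul_inv,
      H.mul_mem_iff_mul_inv_mem_of_forall_sq_mem hH, inv_inv]
  rw [hpairs, index_eq_card, Nat.card_eq_fintype_card]
  exact sq_card_le_card_mul_card_filter_comp_eq D _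

/-- For an abelian difference set `D` with `k > λ`, there is a `g ∈ G` such that
`d₁·d₂ = g⁻²` has strictly more than `λ` solutions `(d₁, d₂) ∈ D × D`. -/
theorem stmt8 {G : Type*} [CommGroup G] [Fintype G] [DecidableEq G]
    (v k l : ℕ) (D : Finset G) (hD : IsDiffSet v k l D) (hkl : l < k) :
    ∃ g : G, l < ((D ×ˢ D).filter (fun p => p.1 * p.2 = g⁻¹ * g⁻¹)).card := by
  classical
  by_contra! hfew
  set H : Subgroup G := (powMonoidHom 2 : G →* G).range
  have hupper : #{p ∈ D ×ˢ D | p.1 * p.2 ∈ H} ≤ l * #(H : Set G).toFinset := by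
    refine card_le_mul_card_image_of_maps_to (fun p hp => by simpa using (mem_filter.1 hp).2) l ?_
    rintro _ hx
    obtain ⟨g, rfl⟩ := Set.mem_toFinset.1 hx
    refine (card_le_card fun p hp => ?_).trans (hfew g⁻¹)
    simp only [mem_filter, inv_inv, powMonoidHom_apply, sq] at hp ⊢
    exact ⟨hp.1.1, hp.2⟩
  have hcard : H.index * #(H : Set G).toFinset = v := by
    rw [← Nat.card_eq_card_toFinset, ← hD.1, ← Nat.card_eq_fintype_card]
    exact H.index_mul_card
  have hsq_le : k * k ≤ l * v :=
    calc k * k = #D ^ 2 := by rw [hD.2.1, sq]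
      _ ≤ H.index * #{p ∈ D ×ˢ D | p.1 * p.2 ∈ H} :=
        H.sq_card_le_index_mul_card_filter_mul_mem (fun g => ⟨g, rfl⟩) D
      _ ≤ H.index * (l * #(H : Set G).toFinset) := Nat.mul_le_mul_left _ hupper
      _ = l * v := by rw [← hcard]; ring
  have hcount := hD.card_mul_self_add
  omega
end

section
/- Let D be a (v,k,λ)-difference set in a finite abelian group G, and suppose that |Dg ∩ (Dg)^(−1)| = λ for every g ∈ G. Then this leads to a contradiction; hence some translate of D satisfies |Dg ∩ (Dg)^(−1)| > λ. -/
open Finset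

lemma card_filter_mul_inv_eq_one {G : Type*} [Group G] [DecidableEq G] (D : Finset G) :
    #{p ∈ D ×ˢ D | p.1 * p.2⁻¹ = 1} = #D := by
  simp only [mul_inv_eq_one, ← diag_eq_filter, diag_card]

theorem IsDiffSet.sum_mul_inv_add {G : Type*} [Group G] [Fintype G] [DecidableEq G]
    {v k l : ℕ} {D : Finset G} (hD : IsDiffSet v k l D) {M : Type*} [AddCommMonoid M]
    (φ : G → M) :
    ∑ p ∈ D ×ˢ D, φ (p.1 * p.2⁻¹) + l • φ 1 = k • φ 1 + l • ∑ c, φ c := by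
  obtain ⟨-, hk, hl⟩ := hD
  have hfiber : ∀ c ∈ ({1}ᶜ : Finset G), #{p ∈ D ×ˢ D | p.1 * p.2⁻¹ = c} • φ c = l • φ c :=
    fun c hc => by rw [hl c (by simpa using hc)]
  calc ∑ p ∈ D ×ˢ D, φ (p.1 * p.2⁻¹) + l • φ 1
      = (#{p ∈ D ×ˢ D | p.1 * p.2⁻¹ = 1} • φ 1
          + ∑ c ∈ {1}ᶜ, #{p ∈ D ×ˢ D | p.1 * p.2⁻¹ = c} • φ c) + l • φ 1 := by
        rw [← sum_fiberwise' _ (fun p : G × G => p.1 * p.2⁻¹) φ, Fintype.sum_eq_add_sum_compl 1]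
        simp only [sum_const]
    _ = k • φ 1 + (l • φ 1 + ∑ c ∈ {1}ᶜ, l • φ c) := by
        rw [card_filter_mul_inv_eq_one, hk, sum_congr rfl hfiber]
        abel
    _ = k • φ 1 + l • ∑ c, φ c := by
        rw [Fintype.sum_eq_add_sum_compl 1 φ, smul_add, smul_sum]

section SquareRoots

variable {G : Type*} [CommGroup G]

lemma mul_eq_inv_sq_iff {a b g : G} : a * b = (g ^ 2)⁻¹ ↔ b = (a * g)⁻¹ * g⁻¹ := by
  rw [← eq_inv_mul_iff_mul_eq, mul_inv_rev, sq, mul_inv_rev, mul_comm g⁻¹ a⁻¹, mul_assoc]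

variable [DecidableEq G]

lemma card_translate_inter_inv (D : Finset G) (g : G) :
    #(D.image (· * g) ∩ (D.image (· * g)).image (·⁻¹)) =
      #{p ∈ D ×ˢ D | p.1 * p.2 = (g ^ 2)⁻¹} := by
  have hmem : ∀ x, x ∈ D.image (· * g) ∩ (D.image (· * g)).image (·⁻¹) ↔
      x * g⁻¹ ∈ D ∧ x⁻¹ * g⁻¹ ∈ D := by
    intro x
    simp only [mem_inter, image_inv_eq_inv, mem_inv', image_mul_right, mem_preimage]
  refine card_nbij' (fun x => (x * g⁻¹, x⁻¹ * g⁻¹)) (fun p => p.1 * g) ?_ ?_ ?_ ?_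
  · intro x hx
    simp only [coe_filter, mem_coe, hmem, mem_product] at hx ⊢
    exact ⟨hx, by rw [mul_mul_mul_comm, mul_inv_cancel, one_mul, sq, mul_inv_rev]⟩
  · intro p hp
    obtain ⟨⟨hp₁, hp₂⟩, hprod⟩ := by simpa only [coe_filter, mem_product] using hp
    simp only [mem_coe, hmem, mul_inv_cancel_right]
    exact ⟨hp₁, mul_eq_inv_sq_iff.mp hprod ▸ hp₂⟩
  · intro x _
    simp
  · intro p hp
    obtain ⟨-, hprod⟩ := by simpa only [coe_filter] using hp
    exact Prod.ext (mul_inv_cancel_right _ _) (mul_eq_inv_sq_iff.mp hprod).symm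

variable [Fintype G]

def sqrtCount (c : G) : ℕ := #{g : G | g ^ 2 = c}

lemma sum_sqrtCount : ∑ c : G, sqrtCount c = Fintype.card G :=
  (card_eq_sum_card_fiberwise fun g _ => mem_univ (g ^ 2)).symm

lemma sqrtCount_one_pos : 0 < sqrtCount (1 : G) :=
  card_pos.mpr ⟨1, by simp⟩

lemma sqrtCount_inv_mul_sq (c a : G) : sqrtCount (c⁻¹ * a ^ 2) = sqrtCount c := by
  refine card_nbij' (fun g => a * g⁻¹) (fun g => g⁻¹ * a) ?_ ?_ ?_ ?_
  · intro g hg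
    simp only [coe_filter, mem_univ, true_and, Set.mem_ofPred_eq] at hg ⊢
    rw [mul_pow, inv_pow, hg]; group
  · intro g hg
    simp only [coe_filter, mem_univ, true_and, Set.mem_ofPred_eq] at hg ⊢
    rw [mul_pow, inv_pow, hg]
  · intro g _; simp
  · intro g _; simp

lemma sum_card_translate_inter_inv (D : Finset G) :
    ∑ g, #(D.image (· * g) ∩ (D.image (· * g)).image (·⁻¹)) =
      ∑ p ∈ D ×ˢ D, sqrtCount (p.1 * p.2⁻¹) := by
  calc ∑ g, #(D.image (· * g) ∩ (D.image (· * g)).image (·⁻¹))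
      = ∑ g, #{p ∈ D ×ˢ D | p.1 * p.2 = (g ^ 2)⁻¹} :=
        sum_congr rfl fun g _ => card_translate_inter_inv D g
    _ = ∑ p ∈ D ×ˢ D, sqrtCount (p.1 * p.2)⁻¹ := by
        simp only [sqrtCount, eq_comm (a := _ * _), inv_eq_iff_eq_inv (a := _ ^ 2)]
        exact sum_card_bipartiteAbove_eq_sum_card_bipartiteBelow _
    _ = ∑ p ∈ D ×ˢ D, sqrtCount (p.1 * p.2⁻¹) := by
        refine sum_congr rfl fun p _ => ?_
        rw [← sqrtCount_inv_mul_sq (p.1 * p.2⁻¹) p.2⁻¹, mul_inv, mul_inv, inv_inv, sq, mul_assoc, mul_inv_cancel_left]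

theorem IsDiffSet.sum_card_translate_inter_inv_add {v k l : ℕ} {D : Finset G}
    (hD : IsDiffSet v k l D) :
    ∑ g, #(D.image (· * g) ∩ (D.image (· * g)).image (·⁻¹)) + l * sqrtCount (1 : G) =
      k * sqrtCount (1 : G) + l * v := by
  rw [sum_card_translate_inter_inv, ← hD.1, ← sum_sqrtCount]
  exact hD.sum_mul_inv_add sqrtCount

end SquareRoots

/-- It is impossible that `|Dg ∩ (Dg)⁽⁻¹⁾| = λ` for every `g`; hence some translate
satisfies `|Dg ∩ (Dg)⁽⁻¹⁾| > λ`. -/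
theorem stmt9 {G : Type*} [CommGroup G] [Fintype G] [DecidableEq G]
    (v k l : ℕ) (D : Finset G) (hD : IsDiffSet v k l D) (hkl : l < k) :
    (¬ ∀ g : G,
        ((D.image (fun d => d * g)) ∩
          ((D.image (fun d => d * g)).image (fun x => x⁻¹))).card = l) ∧
    ∃ g : G, l <
        ((D.image (fun d => d * g)) ∩
          ((D.image (fun d => d * g)).image (fun x => x⁻¹))).card := by
  have hsum := hD.sum_card_translate_inter_inv_add
  have hroot : 0 < sqrtCount (1 : G) := sqrtCount_one_pos
  have hlt : ∑ _g : G, l < ∑ g : G,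
      #((D.image (fun d => d * g)) ∩ ((D.image (fun d => d * g)).image (fun x => x⁻¹))) := by
    rw [sum_const, card_univ, hD.1, smul_eq_mul]
    nlinarith
  obtain ⟨g, -, hg⟩ := exists_lt_of_sum_lt hlt
  exact ⟨fun h => hg.ne' (h g), g, hg⟩
end

section
/- Let D be a subset of a finite group G. Then D is a left difference set if and only if D is a right difference set, i.e., every non-identity element of G occurs exactly λ times as x⁻¹y with x,y ∈ D if and only if every non-identity element occurs exactly λ times as yx⁻¹ with x,y ∈ D. -/
/-!
Let `M` be the incidence matrix of the translates `gD` against the points of `G`. The left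
and right representation counts are the entries of `MᵀM` and `MMᵀ`, so `D` is a left (resp.
right) difference set iff `MᵀM` (resp. `MMᵀ`) is `C = (k - λ)I + λJ`. Having constant row and
column sums, `M` commutes with `J` and hence with `C`. A real matrix commuting with `MᵀM` is
normal: by cyclicity of the trace, `tr ((MMᵀ - MᵀM)ᵀ (MMᵀ - MᵀM)) = 0`.
-/

open Finset Matrix

namespace Matrix

variable {n R : Type*} [Fintype n]

theorem commute_ones_of_sum_eq [NonAssocSemiring R] {A : Matrix n n R} {s : R}
    (hrow : ∀ i, ∑ j, A i j = s) (hcol : ∀ j, ∑ i, A i j = s) :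
    Commute A (of fun _ _ => 1) := by
  ext i j
  simp [mul_apply, hrow, hcol]

theorem eq_smul_one_add_smul_ones_iff [Ring R] {G : Type*} [Group G] [DecidableEq G]
    {F : Matrix G G R} {f : G → R} (hF : ∀ x y, F x y = f (x⁻¹ * y)) {k : R} (hf : f 1 = k)
    (l : R) : F = (k - l) • 1 + l • of (fun _ _ => 1) ↔ ∀ g ≠ 1, f g = l := by
  constructor
  · intro h g hg
    simpa [hF, Ne.symm hg] using congrFun₂ h 1 g
  · intro h
    ext x y
    by_cases hxy : x = y
    · simp [hF, hxy, hf]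
    · simp [hF, hxy, h _ (mt inv_mul_eq_one.mp hxy)]

variable [CommRing R] [PartialOrder R] [StarRing R] [StarOrderedRing R] [NoZeroDivisors R]

theorem mul_conjTranspose_self_eq_of_commute {A : Matrix n n R} (h : Commute A (Aᴴ * A)) :
    A * Aᴴ = Aᴴ * A := by
  set P := A * Aᴴ
  set C := Aᴴ * A
  have hsq : trace (P * P) = trace (C * C) := by
    simp only [P, C, mul_assoc]
    rw [trace_mul_comm A]
    simp only [mul_assoc]
  have hPC : trace (P * C) = trace (C * C) := by
    rw [show P * C = A * (Aᴴ * C) by simp only [P, mul_assoc], trace_mul_comm, mul_assoc,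
      ← h.eq, ← mul_assoc]
  have hCP : trace (C * P) = trace (P * C) := trace_mul_comm C P
  have hPH : Pᴴ = P := (isHermitian_mul_conjTranspose_self A).eq
  have hCH : Cᴴ = C := (isHermitian_conjTranspose_mul_self A).eq
  have htrace : trace ((P - C)ᴴ * (P - C)) = 0 := by
    rw [conjTranspose_sub, hPH, hCH]
    simp only [sub_mul, mul_sub, trace_sub, hsq, hPC, hCP, sub_self]
  rwa [trace_conjTranspose_mul_self_eq_zero_iff, sub_eq_zero] at htrace

theorem conjTranspose_mul_self_eq_iff_mul_conjTranspose_self_eq {A C : Matrix n n R}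
    (hA : Commute A C) (hAH : Commute Aᴴ C) : Aᴴ * A = C ↔ A * Aᴴ = C := by
  constructor
  · intro h
    rw [mul_conjTranspose_self_eq_of_commute (h ▸ hA), h]
  · intro h
    have hAH' : Commute Aᴴ (Aᴴᴴ * Aᴴ) := by rwa [conjTranspose_conjTranspose, h]
    simpa only [conjTranspose_conjTranspose, h] using mul_conjTranspose_self_eq_of_commute hAH'

end Matrix

namespace Finset

variable {G : Type*} [Group G] [DecidableEq G] (D : Finset G)

theorem card_filter_inv_mul_eq_one : #{p ∈ D ×ˢ D | p.1⁻¹ * p.2 = 1} = #D := by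
  rw [← D.diag_card]
  congr 1
  ext ⟨a, b⟩
  simp only [mem_filter, mem_product, mem_diag, inv_mul_eq_one]
  grind

theorem card_filter_mul_inv_eq_one : #{p ∈ D ×ˢ D | p.2 * p.1⁻¹ = 1} = #D := by
  rw [← D.diag_card]
  congr 1
  ext ⟨a, b⟩
  simp only [mem_filter, mem_product, mem_diag, mul_inv_eq_one]
  grind

variable [Fintype G]

/-- Rows are indexed by the translates `g • D`, columns by the points of `G`. -/
def translateIncidence : Matrix G G ℤ :=
  of fun g x => if g⁻¹ * x ∈ D then 1 else 0

theorem sum_translateIncidence_row (g : G) : ∑ x, D.translateIncidence g x = #D := by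
  simp only [translateIncidence, of_apply]
  rw [← Equiv.sum_comp (Equiv.mulLeft g)]
  simp

theorem sum_translateIncidence_col (x : G) : ∑ g, D.translateIncidence g x = #D := by
  simp only [translateIncidence, of_apply]
  rw [← ((Equiv.mulRight x⁻¹).trans (Equiv.inv G)).sum_comp]
  simp

theorem conjTranspose_translateIncidence_mul_apply (x y : G) :
    (D.translateIncidenceᴴ * D.translateIncidence) x y =
      #{p ∈ D ×ˢ D | p.1⁻¹ * p.2 = x⁻¹ * y} := by
  have hcount : (D.translateIncidenceᴴ * D.translateIncidence) x y =
      #{g | g⁻¹ * x ∈ D ∧ g⁻¹ * y ∈ D} := by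
    simp [mul_apply, translateIncidence, ← ite_and, sum_boole, and_comm]
  rw [hcount, Nat.cast_inj]
  refine card_nbij' (fun g => (g⁻¹ * x, g⁻¹ * y)) (fun p => x * p.1⁻¹) ?_ ?_ ?_ ?_
  · intro g
    simp
  · rintro ⟨a, b⟩
    simp only [coe_filter, mem_product, Set.mem_ofPred_eq, inv_mul_eq_iff_eq_mul]
    rintro ⟨⟨ha, hb⟩, rfl⟩
    simp [mul_assoc, ha, hb]
  · intro g
    simp
  · rintro ⟨a, b⟩
    simp only [coe_filter, mem_product, Set.mem_ofPred_eq, inv_mul_eq_iff_eq_mul]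
    rintro ⟨-, rfl⟩
    simp [mul_assoc]

theorem translateIncidence_mul_conjTranspose_apply (x y : G) :
    (D.translateIncidence * D.translateIncidenceᴴ) x y =
      #{p ∈ D ×ˢ D | p.2 * p.1⁻¹ = x⁻¹ * y} := by
  have hcount : (D.translateIncidence * D.translateIncidenceᴴ) x y =
      #{g | y⁻¹ * g ∈ D ∧ x⁻¹ * g ∈ D} := by
    simp [mul_apply, translateIncidence, ← ite_and, sum_boole]
  rw [hcount, Nat.cast_inj]
  refine card_nbij' (fun g => (y⁻¹ * g, x⁻¹ * g)) (fun p => y * p.1) ?_ ?_ ?_ ?_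
  · intro g
    simp [mul_assoc, and_comm]
  · rintro ⟨a, b⟩
    simp only [coe_filter, mem_product, Set.mem_ofPred_eq, mul_inv_eq_iff_eq_mul]
    rintro ⟨⟨ha, hb⟩, rfl⟩
    simp [← mul_assoc, ha, hb]
  · intro g
    simp
  · rintro ⟨a, b⟩
    simp only [coe_filter, mem_product, Set.mem_ofPred_eq, mul_inv_eq_iff_eq_mul]
    rintro ⟨-, rfl⟩
    simp [mul_assoc]

theorem conjTranspose_translateIncidence_mul_eq_iff (l : ℕ) :
    D.translateIncidenceᴴ * D.translateIncidence =
        ((#D : ℤ) - l) • 1 + (l : ℤ) • of (fun _ _ => 1) ↔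
      ∀ g ≠ 1, #{p ∈ D ×ˢ D | p.1⁻¹ * p.2 = g} = l := by
  rw [eq_smul_one_add_smul_ones_iff (f := fun g => (#{p ∈ D ×ˢ D | p.1⁻¹ * p.2 = g} : ℤ))
    D.conjTranspose_translateIncidence_mul_apply (by exact_mod_cast D.card_filter_inv_mul_eq_one)]
  simp only [Nat.cast_inj]

theorem translateIncidence_mul_conjTranspose_eq_iff (l : ℕ) :
    D.translateIncidence * D.translateIncidenceᴴ =
        ((#D : ℤ) - l) • 1 + (l : ℤ) • of (fun _ _ => 1) ↔
      ∀ g ≠ 1, #{p ∈ D ×ˢ D | p.2 * p.1⁻¹ = g} = l := by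
  rw [eq_smul_one_add_smul_ones_iff (f := fun g => (#{p ∈ D ×ˢ D | p.2 * p.1⁻¹ = g} : ℤ))
    D.translateIncidence_mul_conjTranspose_apply (by exact_mod_cast D.card_filter_mul_inv_eq_one)]
  simp only [Nat.cast_inj]

end Finset

/-- `D` is a left difference set iff it is a right difference set: each non-identity
element has exactly `l` representations `x⁻¹y` iff exactly `l` representations `yx⁻¹`
(`x, y ∈ D`). -/
theorem stmt13 {G : Type*} [Group G] [Fintype G] [DecidableEq G]
    (D : Finset G) (l : ℕ) :
    (∀ g : G, g ≠ 1 → ((D ×ˢ D).filter (fun p => p.1⁻¹ * p.2 = g)).card = l) ↔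
      (∀ g : G, g ≠ 1 → ((D ×ˢ D).filter (fun p => p.2 * p.1⁻¹ = g)).card = l) := by
  have hCommute {A : Matrix G G ℤ} (h : Commute A (of fun _ _ => 1)) :
      Commute A (((#D : ℤ) - l) • 1 + (l : ℤ) • of fun _ _ => 1) :=
    ((Commute.one_right A).smul_right _).add_right (h.smul_right _)
  have hM := commute_ones_of_sum_eq D.sum_translateIncidence_row D.sum_translateIncidence_col
  have hMH : Commute D.translateIncidenceᴴ (of fun _ _ => 1) :=
    commute_ones_of_sum_eq (s := (#D : ℤ)) (by simpa using D.sum_translateIncidence_col)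
      (by simpa using D.sum_translateIncidence_row)
  rw [← D.conjTranspose_translateIncidence_mul_eq_iff,
    ← D.translateIncidence_mul_conjTranspose_eq_iff]
  exact conjTranspose_mul_self_eq_iff_mul_conjTranspose_self_eq (hCommute hM) (hCommute hMH)
end

section
/- Let D be a non-trivial reversible (v,k,λ)-difference set in a finite abelian group G (so D^(−1) = D and k − λ > 1). Then λ is even. (Hint: pair each non-identity element g with g⁻¹; each representation g = xy⁻¹ with x,y ∈ D yields a representation g⁻¹ = yx⁻¹, and for elements g with g = g⁻¹ the representations pair up.) -/
/-!
Representations of `g` as `x * y⁻¹` are permuted by an involution: by the swap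
`(x, y) ↦ (y, x)` when `g = g⁻¹`, and, using `D⁻¹ = D`, by `(x, y) ↦ (y⁻¹, x⁻¹)` for every `g`.
The first has no fixed points when `g ≠ 1`; the second has none when `g = r²` with `r ∉ D`, provided
squaring is injective. So if `λ` were odd, `G` would have no element of order two, and then `D` would
contain every `r ≠ 1`. But `λ = |D ∩ gD| ≥ 2k - v` for `g ≠ 1`, so `|D| ≥ v - 1` forces `k - λ ≤ 1`.
-/

open Finset Pointwise

theorem Finset.even_card_of_involution {α : Type*} {s : Finset α} (f : α → α)
    (hf : ∀ a ∈ s, f a ≠ a) (f_mem : ∀ a ∈ s, f a ∈ s) (f_inv : ∀ a ∈ s, f (f a) = a) :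
    Even #s := by
  have h : ∑ _ ∈ s, (1 : ZMod 2) = 0 :=
    sum_involution (fun a _ => f a) (fun _ _ => by decide) (fun a ha _ => hf a ha) f_mem f_inv
  simpa [ZMod.natCast_eq_zero_iff_even] using h

section DiffReps

variable {G : Type*} [DecidableEq G]

def diffReps [Group G] (D : Finset G) (g : G) : Finset (G × G) :=
  (D ×ˢ D).filter (fun p => p.1 * p.2⁻¹ = g)

@[simp]
theorem mem_diffReps [Group G] {D : Finset G} {g : G} {p : G × G} :
    p ∈ diffReps D g ↔ (p.1 ∈ D ∧ p.2 ∈ D) ∧ p.1 * p.2⁻¹ = g := by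
  simp [diffReps]

theorem even_card_diffReps_of_mul_self_eq_one [Group G] (D : Finset G) {g : G} (hg : g ≠ 1)
    (hgg : g * g = 1) : Even #(diffReps D g) := by
  have hginv : g⁻¹ = g := inv_eq_of_mul_eq_one_right hgg
  refine even_card_of_involution Prod.swap ?_ ?_ fun _ _ => rfl
  · rintro ⟨x, y⟩ hp hxy
    cases Prod.ext_iff.mp hxy |>.1
    rw [mem_diffReps, mul_inv_cancel] at hp
    exact hg hp.2.symm
  · rintro ⟨x, y⟩ hp
    simp only [mem_diffReps, Prod.fst_swap, Prod.snd_swap] at hp ⊢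
    exact ⟨hp.1.symm, by rw [← hginv, ← hp.2, mul_inv_rev, inv_inv]⟩

theorem even_card_diffReps_of_inv_mem [CommGroup G] {D : Finset G} (hD : ∀ x ∈ D, x⁻¹ ∈ D)
    {g : G} (hg : ∀ x ∈ D, x * x ≠ g) : Even #(diffReps D g) := by
  refine even_card_of_involution (fun p => (p.2⁻¹, p.1⁻¹)) ?_ ?_ (fun _ _ => by simp)
  · rintro ⟨x, y⟩ hp hxy
    obtain rfl : y⁻¹ = x := Prod.ext_iff.mp hxy |>.1
    simp only [mem_diffReps] at hp
    exact hg y⁻¹ hp.1.1 hp.2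
  · rintro ⟨x, y⟩ hp
    simp only [mem_diffReps, inv_inv] at hp ⊢
    exact ⟨⟨hD y hp.1.2, hD x hp.1.1⟩, by rw [mul_comm, hp.2]⟩

theorem card_add_card_le_card_diffReps_add_card [Group G] [Fintype G] (D : Finset G) (g : G) :
    #D + #D ≤ #(diffReps D g) + Fintype.card G := by
  have hinter : #(D ∩ g • D) ≤ #(diffReps D g) := by
    refine card_le_card_of_injOn (fun x => (x, g⁻¹ * x)) (fun x hx => ?_) ?_
    · obtain ⟨hxD, hxgD⟩ := mem_inter.mp hx
      obtain ⟨y, hyD, rfl⟩ := mem_smul_finset.mp hxgD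
      simp only [smul_eq_mul, inv_mul_cancel_left]
      exact mem_diffReps.mpr ⟨⟨hxD, hyD⟩, mul_inv_cancel_right g y⟩
    · intro x _ y _ hxy
      exact (Prod.ext_iff.mp hxy).1
  calc #D + #D = #(D ∪ g • D) + #(D ∩ g • D) := by
        rw [card_union_add_card_inter, card_smul_finset]
    _ ≤ Fintype.card G + #(diffReps D g) := add_le_add (card_le_univ _) hinter
    _ = #(diffReps D g) + Fintype.card G := add_comm _ _

end DiffReps

theorem eq_of_mul_self_eq_mul_self {G : Type*} [CommGroup G] (h : ∀ g : G, g ≠ 1 → g * g ≠ 1)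
    {x y : G} (hxy : x * x = y * y) : x = y := by
  by_contra hne
  refine h (x * y⁻¹) (mul_inv_eq_one.not.mpr hne) ?_
  rw [mul_mul_mul_comm, ← mul_inv, hxy, mul_inv_cancel]

/-- A non-trivial reversible abelian difference set has even `λ`. -/
theorem stmt16 {G : Type*} [CommGroup G] [Fintype G] [DecidableEq G]
    (v k l : ℕ) (D : Finset G) (hD : IsDiffSet v k l D)
    (hrev : D.image (fun x => x⁻¹) = D) (hn : 1 < k - l) :
    Even l := by
  obtain ⟨hv, hk, hl⟩ := hD
  have hDinv : ∀ x ∈ D, x⁻¹ ∈ D := fun x hx => hrev ▸ mem_image_of_mem _ hx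
  by_contra hodd
  have hno_involution : ∀ g : G, g ≠ 1 → g * g ≠ 1 := fun g hg hgg =>
    hodd (hl g hg ▸ even_card_diffReps_of_mul_self_eq_one D hg hgg)
  have hfull : univ.erase 1 ⊆ D := by
    intro r hr
    by_contra hrD
    exact hodd <| hl (r * r) (hno_involution r (ne_of_mem_erase hr)) ▸
      even_card_diffReps_of_inv_mem hDinv fun x hx hxx =>
        hrD (eq_of_mul_self_eq_mul_self hno_involution hxx ▸ hx)
  have hcard_le : Fintype.card G ≤ k + 1 := by
    have := card_le_card hfull
    rw [card_erase_of_mem (mem_univ _), card_univ] at this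
    omega
  have hcard : 1 < Fintype.card G := by
    have := card_le_univ D
    omega
  obtain ⟨g, hg⟩ := Fintype.exists_ne_of_one_lt_card hcard 1
  have hlg : #(diffReps D g) = l := hl g hg
  have := card_add_card_le_card_diffReps_add_card D g
  omega
end

section
/- Let G₁ and G₂ be finite groups containing Hadamard difference sets D₁ and D₂ respectively, with parameters (4u₁², 2u₁²−u₁, u₁²−u₁) and (4u₂², 2u₂²−u₂, u₂²−u₂). Then D = (D₁ × (G₂ \ D₂)) ∪ ((G₁ \ D₁) × D₂) is a Hadamard difference set in G₁ × G₂ with parameters (16u₁²u₂², 8u₁²u₂² − 2u₁u₂, 4u₁²u₂² − 2u₁u₂), i.e. the Hadamard parameters for u = 2u₁u₂. -/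
set_option linter.unusedSectionVars false
set_option maxHeartbeats 1000000

section Aux
open Finset
variable {G : Type*} [Group G] [Fintype G] [DecidableEq G]

lemma count_eq (D : Finset G) (g : G) :
    ((D ×ˢ D).filter (fun p => p.1 * p.2⁻¹ = g)).card
      = (D.filter (fun a => g⁻¹ * a ∈ D)).card := by
  apply Finset.card_bij' (fun p _ => p.1) (fun a _ => (a, g⁻¹ * a))
  · intro p hp
    simp only [Finset.mem_filter, Finset.mem_product] at hp ⊢
    obtain ⟨⟨h1, h2⟩, h3⟩ := hp
    refine ⟨h1, ?_⟩
    have : g⁻¹ * p.1 = p.2 := by rw [← h3]; group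
    rw [this]; exact h2
  · intro a ha
    simp only [Finset.mem_filter, Finset.mem_product] at ha ⊢
    exact ⟨⟨ha.1, ha.2⟩, by group⟩
  · intro p hp
    simp only [Finset.mem_filter] at hp
    have : g⁻¹ * p.1 = p.2 := by rw [← hp.2]; group
    exact Prod.ext rfl this
  · intro a ha; rfl

lemma eqA (s D : Finset G) (g : G) :
    (s.filter fun a => g⁻¹ * a ∈ D).card + (s.filter fun a => g⁻¹ * a ∈ Dᶜ).card = s.card := by
  have := Finset.card_filter_add_card_filter_not (s := s)
    (p := fun a => g⁻¹ * a ∈ D)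
  simpa [Finset.mem_compl] using this

lemma eqB (D : Finset G) (g : G) :
    (D.filter fun a => g⁻¹ * a ∈ D).card + (Dᶜ.filter fun a => g⁻¹ * a ∈ D).card = D.card := by
  have himg : (Finset.univ.filter fun a => g⁻¹ * a ∈ D) = D.image (fun b => g * b) := by
    ext x
    simp only [Finset.mem_filter, Finset.mem_univ, true_and, Finset.mem_image]
    constructor
    · intro h; exact ⟨g⁻¹ * x, h, by group⟩
    · rintro ⟨b, hb, rfl⟩; simpa using hb
  have hdis : Disjoint (D.filter fun a => g⁻¹ * a ∈ D) (Dᶜ.filter fun a => g⁻¹ * a ∈ D) :=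
    Finset.disjoint_filter_filter disjoint_compl_right
  rw [← Finset.card_union_of_disjoint hdis, ← Finset.filter_union, Finset.union_compl, himg,
    Finset.card_image_of_injective _ (mul_right_injective g)]

/-- The four counts when `g ≠ 1`. -/
lemma quad_ne {v k l : ℕ} {D : Finset G}
    (hv : Fintype.card G = v) (hk : D.card = k)
    (hl : ∀ g : G, g ≠ 1 → ((D ×ˢ D).filter (fun p => p.1 * p.2⁻¹ = g)).card = l)
    {g : G} (hg : g ≠ 1) :
    (D.filter fun a => g⁻¹ * a ∈ D).card = l ∧
    (D.filter fun a => g⁻¹ * a ∈ Dᶜ).card = k - l ∧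
    (Dᶜ.filter fun a => g⁻¹ * a ∈ D).card = k - l ∧
    (Dᶜ.filter fun a => g⁻¹ * a ∈ Dᶜ).card = (v - k) - (k - l) := by
  have h11 : (D.filter fun a => g⁻¹ * a ∈ D).card = l := by
    rw [← count_eq]; exact hl g hg
  have hA := eqA D D g
  have hB := eqB D g
  have hC := eqA Dᶜ D g
  have hcc : Dᶜ.card = v - k := by rw [Finset.card_compl, hv, hk]
  rw [h11, hk] at hA hB
  rw [hcc] at hC
  omega

/-- The four counts when `g = 1`. -/
lemma quad_one {v k : ℕ} {D : Finset G}
    (hv : Fintype.card G = v) (hk : D.card = k) :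
    (D.filter fun a => (1:G)⁻¹ * a ∈ D).card = k ∧
    (D.filter fun a => (1:G)⁻¹ * a ∈ Dᶜ).card = 0 ∧
    (Dᶜ.filter fun a => (1:G)⁻¹ * a ∈ D).card = 0 ∧
    (Dᶜ.filter fun a => (1:G)⁻¹ * a ∈ Dᶜ).card = v - k := by
  have h11 : (D.filter fun a => (1:G)⁻¹ * a ∈ D).card = k := by
    rw [← hk]; congr 1; simp [Finset.filter_eq_self]
  have hA := eqA D D (1:G)
  have hB := eqB D (1:G)
  have hC := eqA Dᶜ D (1:G)
  have hcc : Dᶜ.card = v - k := by rw [Finset.card_compl, hv, hk]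
  rw [h11, hk] at hA hB
  rw [hcc] at hC
  omega

lemma nat_arith {u s : ℕ} (h : u ≤ s) :
    (2*s - u) - (s - u) = s ∧
    ((4*s - (2*s - u)) - ((2*s - u) - (s - u)) = s + u) ∧
    (4*s - (2*s - u) = 2*s + u) := by omega

end Aux

/-- Menon's composition: from Hadamard difference sets for `u₁` and `u₂`, the set
`(D₁ × (G₂ \ D₂)) ∪ ((G₁ \ D₁) × D₂)` is a Hadamard difference set for `u = 2u₁u₂`. -/
theorem stmt18 {G₁ G₂ : Type*} [Group G₁] [Fintype G₁] [DecidableEq G₁]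
    [Group G₂] [Fintype G₂] [DecidableEq G₂]
    (u₁ u₂ : ℕ) (hu₁ : 0 < u₁) (hu₂ : 0 < u₂)
    (D₁ : Finset G₁) (D₂ : Finset G₂)
    (hD₁ : IsDiffSet (4 * u₁ ^ 2) (2 * u₁ ^ 2 - u₁) (u₁ ^ 2 - u₁) D₁)
    (hD₂ : IsDiffSet (4 * u₂ ^ 2) (2 * u₂ ^ 2 - u₂) (u₂ ^ 2 - u₂) D₂) :
    IsDiffSet (16 * u₁ ^ 2 * u₂ ^ 2)
      (8 * u₁ ^ 2 * u₂ ^ 2 - 2 * (u₁ * u₂))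
      (4 * u₁ ^ 2 * u₂ ^ 2 - 2 * (u₁ * u₂))
      ((D₁ ×ˢ D₂ᶜ) ∪ (D₁ᶜ ×ˢ D₂)) := by
  obtain ⟨hv₁, hk₁, hl₁⟩ := hD₁
  obtain ⟨hv₂, hk₂, hl₂⟩ := hD₂
  have e₁ : u₁ ≤ u₁ ^ 2 := Nat.le_self_pow (by norm_num) u₁
  have e₂ : u₂ ≤ u₂ ^ 2 := Nat.le_self_pow (by norm_num) u₂
  have b₁ : u₁ ≤ 2 * u₁ ^ 2 := by nlinarith
  have b₂ : u₂ ≤ 2 * u₂ ^ 2 := by nlinarith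
  have c₁ : 2 * u₁ ^ 2 - u₁ ≤ 4 * u₁ ^ 2 := le_trans (Nat.sub_le _ _) (by nlinarith)
  have c₂ : 2 * u₂ ^ 2 - u₂ ≤ 4 * u₂ ^ 2 := le_trans (Nat.sub_le _ _) (by nlinarith)
  have hb8 : 2 * (u₁ * u₂) ≤ 8 * u₁ ^ 2 * u₂ ^ 2 := by nlinarith
  have hb4 : 2 * (u₁ * u₂) ≤ 4 * u₁ ^ 2 * u₂ ^ 2 := by nlinarith
  have hdisj : Disjoint (D₁ ×ˢ D₂ᶜ) (D₁ᶜ ×ˢ D₂) := by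
    rw [Finset.disjoint_left]
    rintro ⟨a, b⟩ ha hb
    simp only [Finset.mem_product, Finset.mem_compl] at ha hb
    exact hb.1 ha.1
  obtain ⟨ar₁, ar₁', ar₁''⟩ := nat_arith e₁ (s := u₁ ^ 2)
  obtain ⟨ar₂, ar₂', ar₂''⟩ := nat_arith e₂ (s := u₂ ^ 2)
  have d₁ : u₁ ^ 2 - u₁ ≤ 2 * u₁ ^ 2 - u₁ := Nat.sub_le_sub_right (by nlinarith) u₁
  have d₂ : u₂ ^ 2 - u₂ ≤ 2 * u₂ ^ 2 - u₂ := Nat.sub_le_sub_right (by nlinarith) u₂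
  have nn₁ : 2 * u₁ ^ 2 - u₁ - (u₁ ^ 2 - u₁) ≤ 4 * u₁ ^ 2 - (2 * u₁ ^ 2 - u₁) := by
    rw [ar₁, ar₁'']; nlinarith
  have nn₂ : 2 * u₂ ^ 2 - u₂ - (u₂ ^ 2 - u₂) ≤ 4 * u₂ ^ 2 - (2 * u₂ ^ 2 - u₂) := by
    rw [ar₂, ar₂'']; nlinarith
  refine ⟨?_, ?_, ?_⟩
  · rw [Fintype.card_prod, hv₁, hv₂]; ring
  · rw [Finset.card_union_of_disjoint hdisj, Finset.card_product, Finset.card_product,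
      Finset.card_compl, Finset.card_compl, hv₁, hv₂, hk₁, hk₂]
    zify [e₁, e₂, b₁, b₂, c₁, c₂, hb8]
    ring
  · rintro ⟨g₁, g₂⟩ hg
    rw [count_eq]
    simp only [Finset.mem_union, Finset.mem_product, Prod.fst_mul, Prod.snd_mul,
      Prod.fst_inv, Prod.snd_inv]
    rw [Finset.filter_union,
      Finset.card_union_of_disjoint (Finset.disjoint_filter_filter hdisj)]
    have hdisjf1 : Disjoint
        ((D₁ ×ˢ D₂ᶜ).filter (fun a => g₁⁻¹ * a.1 ∈ D₁ ∧ g₂⁻¹ * a.2 ∈ D₂ᶜ))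
        ((D₁ ×ˢ D₂ᶜ).filter (fun a => g₁⁻¹ * a.1 ∈ D₁ᶜ ∧ g₂⁻¹ * a.2 ∈ D₂)) := by
      rw [Finset.disjoint_filter]
      rintro a _ ⟨h1, _⟩ ⟨h2, _⟩
      exact (Finset.mem_compl.mp h2) h1
    have hdisjf2 : Disjoint
        ((D₁ᶜ ×ˢ D₂).filter (fun a => g₁⁻¹ * a.1 ∈ D₁ ∧ g₂⁻¹ * a.2 ∈ D₂ᶜ))
        ((D₁ᶜ ×ˢ D₂).filter (fun a => g₁⁻¹ * a.1 ∈ D₁ᶜ ∧ g₂⁻¹ * a.2 ∈ D₂)) := by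
      rw [Finset.disjoint_filter]
      rintro a _ ⟨h1, _⟩ ⟨h2, _⟩
      exact (Finset.mem_compl.mp h2) h1
    rw [Finset.filter_or, Finset.filter_or,
      Finset.card_union_of_disjoint hdisjf1,
      Finset.card_union_of_disjoint hdisjf2]
    rw [Finset.filter_product (s := D₁) (t := D₂ᶜ) (fun x => g₁⁻¹ * x ∈ D₁) (fun y => g₂⁻¹ * y ∈ D₂ᶜ),
      Finset.filter_product (s := D₁) (t := D₂ᶜ) (fun x => g₁⁻¹ * x ∈ D₁ᶜ) (fun y => g₂⁻¹ * y ∈ D₂),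
      Finset.filter_product (s := D₁ᶜ) (t := D₂) (fun x => g₁⁻¹ * x ∈ D₁) (fun y => g₂⁻¹ * y ∈ D₂ᶜ),
      Finset.filter_product (s := D₁ᶜ) (t := D₂) (fun x => g₁⁻¹ * x ∈ D₁ᶜ) (fun y => g₂⁻¹ * y ∈ D₂),
      Finset.card_product, Finset.card_product, Finset.card_product, Finset.card_product]
    by_cases hg₁ : g₁ = 1
    · have hg₂ : g₂ ≠ 1 := by
        rintro rfl; exact hg (by rw [hg₁]; rfl)
      subst hg₁
      obtain ⟨q11, q10, q01, q00⟩ := quad_one hv₁ hk₁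
      obtain ⟨r11, r10, r01, r00⟩ := quad_ne hv₂ hk₂ hl₂ hg₂
      rw [q11, q10, q01, q00, r11, r10, r01, r00]
      zify [e₁, e₂, b₁, b₂, c₁, c₂, d₁, d₂, nn₁, nn₂, hb4]
      ring
    · by_cases hg₂ : g₂ = 1
      · subst hg₂
        obtain ⟨q11, q10, q01, q00⟩ := quad_ne hv₁ hk₁ hl₁ hg₁
        obtain ⟨r11, r10, r01, r00⟩ := quad_one hv₂ hk₂
        rw [q11, q10, q01, q00, r11, r10, r01, r00]
        zify [e₁, e₂, b₁, b₂, c₁, c₂, d₁, d₂, nn₁, nn₂, hb4]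
        ring
      · obtain ⟨q11, q10, q01, q00⟩ := quad_ne hv₁ hk₁ hl₁ hg₁
        obtain ⟨r11, r10, r01, r00⟩ := quad_ne hv₂ hk₂ hl₂ hg₂
        rw [q11, q10, q01, q00, r11, r10, r01, r00]
        zify [e₁, e₂, b₁, b₂, c₁, c₂, d₁, d₂, nn₁, nn₂, hb4]
        ring
end
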